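/- Let λ be a partition of n and β any composition with underlying partition shape λ. Define for each row-strict composition tableau Υ of shape β the monomial x^Υ = ∏_{(i,j) ∈ Inv(Υ)} x_i. Then the set {x^Υ : Υ ∈ RSCT_n(β)} equals the Garsia–Procesi monomial set Sp_λ defined recursively by Sp_λ = ⊔_{1 ≤ i ≤ k} x_{m̄}^{i−1} Sp_{λ[i]} (in the variables indexed by the minimal content value, with initial condition Sp_{(1)} = {1}). In particular this set depends only on λ and not on the ordering of the parts of β. -/

import Mathlib

open Finset

/-- The content interval `[n-m+1, n]` of a shifted tableau. -/
def content (n m : ℕ) : Finset ℕ := Finset.Icc (n - m + 1) n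

lemma content_mono (n m : ℕ) : content n (m - 1) ⊆ content n m := by
  intro x hx
  simp only [content, Finset.mem_Icc] at *
  omega

/-- A (shifted) row-strict composition tableau of shape `β` (a weak composition of `m` with
`k` parts) and content `[n-m+1, n]`, encoded by the assignment of each entry to its row.
(The filling of each row is determined by its set of entries, since entries strictly decrease
from left to right in each row.) -/
abbrev RSCT (n m k : ℕ) (β : Fin k → ℕ) : Type :=
  {row : {i : ℕ // i ∈ content n m} → Fin k //
    ∀ j : Fin k, (Finset.univ.filter fun i => row i = j).card = β j}

/-- The (0-indexed) column of entry `i`: the number of larger entries in its own row. -/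
def colOf {n m k : ℕ} {β : Fin k → ℕ} (T : RSCT n m k β)
    (i : {a : ℕ // a ∈ content n m}) : ℕ :=
  (Finset.univ.filter fun i' : {a : ℕ // a ∈ content n m} =>
    T.val i' = T.val i ∧ (i : ℕ) < (i' : ℕ)).card

/-- `(i, j)` is a Springer inversion of `T`: there is an entry `i' > i` in row `j` that is
either directly above `i` in the same column, or in a column strictly to the right of the
column of `i`. -/
def isInv {n m k : ℕ} {β : Fin k → ℕ} (T : RSCT n m k β) (i : ℕ) (j : Fin k) : Prop :=
  ∃ (hi : i ∈ content n m) (i' : {a : ℕ // a ∈ content n m}),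
    T.val i' = j ∧ i < (i' : ℕ) ∧
      (colOf T ⟨i, hi⟩ < colOf T i' ∨
        (colOf T i' = colOf T ⟨i, hi⟩ ∧ j < T.val ⟨i, hi⟩))

/-- The finite set of Springer inversions of `T`. -/
noncomputable def InvF {n m k : ℕ} {β : Fin k → ℕ} (T : RSCT n m k β) :
    Finset (ℕ × Fin k) :=
  @Finset.filter (ℕ × Fin k) (fun p => isInv T p.1 p.2) (Classical.decPred _)
    ((content n m) ×ˢ (Finset.univ : Finset (Fin k)))

/-- The inversion vector of `T`: `invVec T i` is the number of Springer inversions of `T`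
with first coordinate `i`. -/
noncomputable def invVec {n m k : ℕ} {β : Fin k → ℕ} (T : RSCT n m k β) (i : ℕ) : ℕ :=
  ((InvF T).filter fun p => p.1 = i).card

/-- `etaRel T T'` expresses that `T'` is obtained from `T` by removing the box containing
the minimal entry `n - m + 1` (which lies at the end of its row). -/
def etaRel {n m k : ℕ} {β β' : Fin k → ℕ} (T : RSCT n m k β)
    (T' : RSCT n (m - 1) k β') : Prop :=
  (∃ h : n - m + 1 ∈ content n m,
      β' = Function.update β (T.val ⟨n - m + 1, h⟩) (β (T.val ⟨n - m + 1, h⟩) - 1)) ∧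
  ∀ (i : ℕ) (hi : i ∈ content n (m - 1)),
      T'.val ⟨i, hi⟩ = T.val ⟨i, content_mono n m hi⟩
/-- The specification of the recursive total order on row-strict composition tableaux:
if the minimal entries lie in different rows, compare via Springer inversions; if they lie
in the same row, compare the tableaux obtained by removing the minimal entry; the relation
is empty on empty tableaux. -/
def OrderSpec (n k : ℕ)
    (R : ∀ (m : ℕ) (β : Fin k → ℕ), RSCT n m k β → RSCT n m k β → Prop) : Prop :=
  (∀ (β : Fin k → ℕ) (T T' : RSCT n 0 k β), ¬ R 0 β T T') ∧
  (∀ (m : ℕ) (β : Fin k → ℕ) (Υ Ω : RSCT n m k β) (h : n - m + 1 ∈ content n m),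
      Υ.val ⟨n - m + 1, h⟩ ≠ Ω.val ⟨n - m + 1, h⟩ →
      (R m β Ω Υ ↔ isInv Υ (n - m + 1) (Ω.val ⟨n - m + 1, h⟩))) ∧
  (∀ (m : ℕ) (β : Fin k → ℕ) (Υ Ω : RSCT n m k β) (h : n - m + 1 ∈ content n m),
      Υ.val ⟨n - m + 1, h⟩ = Ω.val ⟨n - m + 1, h⟩ →
      ∀ (β' : Fin k → ℕ) (Υ' Ω' : RSCT n (m - 1) k β'),
        etaRel Υ Υ' → etaRel Ω Ω' → (R m β Ω Υ ↔ R (m - 1) β' Ω' Υ'))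

/-- The equivariant Springer monomial `P_Υ(z, x) = ∏_{(i,j) ∈ Inv(Υ)} (x_i − z_j)`,
with `x`-variables indexed by `Sum.inl` and `z`-variables by `Sum.inr`. -/
noncomputable def Ppoly {n m k : ℕ} {β : Fin k → ℕ} (T : RSCT n m k β) :
    MvPolynomial (ℕ ⊕ Fin k) ℂ :=
  ∏ p ∈ InvF T, (MvPolynomial.X (Sum.inl p.1) - MvPolynomial.X (Sum.inr p.2))

/-- The localization map `φ_{w_Ω}`, substituting `x_i ↦ z_{r(i,Ω)}` where `r(i,Ω)` is the
row of `Ω` containing `i`, and fixing the `z`-variables. -/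
noncomputable def loc {n m k : ℕ} {β : Fin k → ℕ} (Ω : RSCT n m k β) :
    MvPolynomial (ℕ ⊕ Fin k) ℂ →ₐ[ℂ] MvPolynomial (Fin k) ℂ :=
  MvPolynomial.aeval fun v => match v with
    | Sum.inl i => if h : i ∈ content n m then MvPolynomial.X (Ω.val ⟨i, h⟩) else 0
    | Sum.inr j => MvPolynomial.X j

/-- Evaluation of all `z`-variables at `0`. -/
noncomputable def evz (k : ℕ) : MvPolynomial (ℕ ⊕ Fin k) ℂ →ₐ[ℂ] MvPolynomial ℕ ℂ :=
  MvPolynomial.aeval fun v => match v with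
    | Sum.inl i => MvPolynomial.X i
    | Sum.inr _ => 0

/-- The Lehmer code of a permutation: `pcode w k = #{j > k : w j < w k}`. -/
def pcode {n : ℕ} (w : Equiv.Perm (Fin n)) (i : Fin n) : ℕ :=
  (Finset.univ.filter fun j => i < j ∧ w j < w i).card

/-- The Coxeter length of a permutation: its number of inversions. -/
def plen {n : ℕ} (w : Equiv.Perm (Fin n)) : ℕ :=
  (Finset.univ.filter fun p : Fin n × Fin n => p.1 < p.2 ∧ w p.2 < w p.1).card

/-- `dropPart μ i` is the partition `μ[i]` (as a multiset of nonzero parts): decrease the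
`i`-th largest part of `μ` (0-indexed) by one and drop zero parts. -/
def dropPart (μ : Multiset ℕ) (i : ℕ) : Multiset ℕ :=
  Multiset.filter (· ≠ 0)
    ((μ.erase (((μ.sort (· ≤ ·)).reverse).getD i 0)) +
      {((μ.sort (· ≤ ·)).reverse).getD i 0 - 1})

/-- The recursive Garsia–Procesi specification: `SP μ s` is the set of Springer monomials
(given as exponent vectors) for the partition `μ` in the variables `x_s, x_{s+1}, …`:
`SP_λ = ⊔_{0 ≤ i < k} x_s^{i} · SP_{λ[i]}` (variables shifted by one in the recursion),
with `SP_∅ = {1}`. -/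
def SPSpec (SP : Multiset ℕ → ℕ → Set (ℕ → ℕ)) : Prop :=
  (∀ s : ℕ, SP 0 s = {fun _ => 0}) ∧
  (∀ (μ : Multiset ℕ) (s : ℕ), μ ≠ 0 →
      SP μ s = {e | ∃ i < Multiset.card μ, ∃ f ∈ SP (dropPart μ i) (s + 1),
                    e = fun t => (if t = s then i else 0) + f t})

/-!
Induction on the number of boxes. In a tableau with `m + 1` boxes the minimal entry `n - m` ends
its row `r`, in column `β r - 1`, and every other row ends in its own smallest entry. Hence
`(n - m, j)` is a Springer inversion exactly when row `j` is longer than row `r`, or equally long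
and above it: there are `σ(r) - 1` of them, and `σ(r) - 1` is a position of the part `β r` in the
decreasingly sorted partition `λ`, so that removing the box turns `λ` into `λ[σ(r) - 1]`. Removing
the box changes neither the row nor the column of any other entry, hence none of their inversions,
and conversely, for each nonzero row `r`, the box can be appended to row `r` of any tableau whose
shape is `β` with that row shortened by one. As `r` runs over the nonzero rows, `σ(r) - 1` runs
over all positions of `λ`.
-/

theorem Finset.card_filter_univ_of_eq_insert {α : Type*} [DecidableEq α] {s t : Finset α}
    {a : α} (ha : a ∉ s) (ht : t = insert a s) (p : {x // x ∈ t} → Prop) [DecidablePred p] :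
    #{x | p x} = #{x : {x // x ∈ s} | p ⟨x, ht ▸ mem_insert_of_mem x.2⟩} +
      if p ⟨a, ht ▸ mem_insert_self a s⟩ then 1 else 0 := by
  subst ht
  have hinj : Function.Injective fun x : {x // x ∈ s} => (⟨x, mem_insert_of_mem x.2⟩ :
      {x // x ∈ insert a s}) := fun x y hxy => by simpa using hxy
  rw [univ_eq_attach, attach_insert, filter_insert, univ_eq_attach, filter_image]
  split_ifs
  · rw [card_insert_of_notMem (by simp [ha]), card_image_of_injective _ hinj]
  · rw [card_image_of_injective _ hinj, add_zero]

theorem List.le_getD_iff_lt_countP {L : List ℕ} (hL : L.Pairwise (· ≥ ·)) {v : ℕ}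
    (hv : 0 < v) (i : ℕ) : v ≤ L.getD i 0 ↔ i < L.countP (v ≤ ·) := by
  induction L generalizing i with
  | nil => simp; omega
  | cons a L ih =>
    rw [List.pairwise_cons] at hL
    by_cases hva : v ≤ a
    · cases i
      · simp [hva]
      · rw [List.getD_cons_succ, ih hL.2]; simp [hva]
    · have hL0 : L.countP (v ≤ ·) = 0 :=
        List.countP_eq_zero.2 fun x hx => by have := hL.1 x hx; simp; omega
      cases i
      · simp [hva, hL0]
      · rw [List.getD_cons_succ, ih hL.2]; simp [hva, hL0]

theorem Multiset.ofFn_update {α : Type*} [DecidableEq α] {k : ℕ} (f : Fin k → α) (r : Fin k)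
    (w : α) : (↑(List.ofFn (Function.update f r w)) : Multiset α) =
      w ::ₘ (↑(List.ofFn f) : Multiset α).erase (f r) := by
  rw [← Fin.univ_val_map, ← Fin.univ_val_map, ← map_erase_of_mem _ _ (mem_univ_val r)]
  conv_lhs => rw [← cons_erase (mem_univ_val r)]
  rw [map_cons, Function.update_self]
  refine congrArg _ (map_congr rfl fun j hj => Function.update_of_ne ?_ _ _)
  exact (Finset.univ.nodup.mem_erase_iff.1 hj).1

section Parts

variable {k : ℕ} (β : Fin k → ℕ)

def partsOf : Multiset ℕ := Multiset.filter (· ≠ 0) ↑(List.ofFn β)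

def RowPrec (j r : Fin k) : Prop := β r < β j ∨ (β j = β r ∧ j < r)

instance : DecidableRel (RowPrec β) := fun _ _ => inferInstanceAs (Decidable (_ ∨ _))

-- `partRank β r` is the paper's `σ(r) - 1`.
def partRank (r : Fin k) : ℕ := #{j | RowPrec β j r}

theorem countP_partsOf (p : ℕ → Prop) [DecidablePred p] (hp : ∀ x, p x → x ≠ 0) :
    (partsOf β).countP p = #{j | p (β j)} := by
  rw [partsOf, Multiset.countP_filter, ← Fin.univ_val_map, Multiset.countP_map]
  change #{j | p (β j) ∧ β j ≠ 0} = _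
  simp only [and_iff_left_of_imp (hp _)]

theorem card_partsOf : Multiset.card (partsOf β) = #{j | β j ≠ 0} := by
  rw [← countP_partsOf β (· ≠ 0) fun _ h => h, eq_comm, Multiset.countP_eq_card]
  exact fun _ hx => (Multiset.mem_filter.1 hx).2

variable {β}

theorem partRank_lt_card_of_subset {r : Fin k} {s : Finset (Fin k)}
    (hsub : ∀ j, RowPrec β j r → j ∈ s) (hr : r ∈ s) : partRank β r < #s := by
  refine card_lt_card ⟨fun j hj => hsub j (mem_filter.1 hj).2, fun h => ?_⟩
  have := (mem_filter.1 (h hr)).2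
  unfold RowPrec at this
  omega

theorem partRank_lt_partRank {r r' : Fin k} (h : RowPrec β r r') :
    partRank β r < partRank β r' := by
  refine partRank_lt_card_of_subset (fun j hj => mem_filter.2 ⟨mem_univ j, ?_⟩)
    (mem_filter.2 ⟨mem_univ r, h⟩)
  unfold RowPrec at *
  omega

theorem partRank_injective : Function.Injective (partRank β) := by
  intro r r' h
  by_contra hne
  have : RowPrec β r r' ∨ RowPrec β r' r := by
    unfold RowPrec
    have := Fin.val_ne_of_ne hne
    omega
  rcases this with h' | h'
  · exact (partRank_lt_partRank h').ne h
  · exact (partRank_lt_partRank h').ne' h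

theorem partRank_lt_card_partsOf {r : Fin k} (hr : β r ≠ 0) :
    partRank β r < Multiset.card (partsOf β) := by
  rw [card_partsOf]
  refine partRank_lt_card_of_subset (fun j hj => mem_filter.2 ⟨mem_univ j, ?_⟩)
    (mem_filter.2 ⟨mem_univ r, hr⟩)
  unfold RowPrec at hj
  omega

theorem exists_partRank_eq {i : ℕ} (hi : i < Multiset.card (partsOf β)) :
    ∃ r, β r ≠ 0 ∧ partRank β r = i := by
  obtain ⟨r, hr, hri⟩ := surj_on_of_inj_on_of_card_le (s := {r | β r ≠ 0})
    (t := range (Multiset.card (partsOf β))) (fun r _ => partRank β r)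
    (fun r hr => mem_range.2 (partRank_lt_card_partsOf (mem_filter.1 hr).2))
    (fun r r' _ _ h => partRank_injective h) (by rw [card_range, card_partsOf]) i (mem_range.2 hi)
  exact ⟨r, (mem_filter.1 hr).2, hri.symm⟩

theorem getD_sort_partsOf_partRank {r : Fin k} (hr : β r ≠ 0) :
    ((partsOf β).sort (· ≤ ·)).reverse.getD (partRank β r) 0 = β r := by
  set L := ((partsOf β).sort (· ≤ ·)).reverse with hL
  have hsorted : L.Pairwise (· ≥ ·) :=
    List.pairwise_reverse.2 (Multiset.pairwise_sort _ _)
  have hcount (v : ℕ) (hv : 0 < v) :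
      L.countP (v ≤ ·) = #{j | v ≤ β j} := by
    rw [hL, List.countP_reverse, ← Multiset.coe_countP, Multiset.sort_eq,
      countP_partsOf β _ (fun x hx => by omega)]
  have hle : β r ≤ L.getD (partRank β r) 0 := by
    rw [List.le_getD_iff_lt_countP hsorted (by omega), hcount _ (by omega)]
    refine partRank_lt_card_of_subset (fun j hj => mem_filter.2 ⟨mem_univ j, ?_⟩)
      (mem_filter.2 ⟨mem_univ r, le_rfl⟩)
    unfold RowPrec at hj
    omega
  have hlt : ¬ β r + 1 ≤ L.getD (partRank β r) 0 := by
    rw [List.le_getD_iff_lt_countP hsorted (by omega), hcount _ (by omega), not_lt]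
    refine card_le_card fun j hj => ?_
    simp only [mem_filter, mem_univ, true_and] at hj ⊢
    unfold RowPrec at *
    omega
  omega

theorem dropPart_partsOf_partRank {r : Fin k} (hr : β r ≠ 0) :
    dropPart (partsOf β) (partRank β r) = partsOf (Function.update β r (β r - 1)) := by
  have hparts : partsOf β =
      β r ::ₘ Multiset.filter (· ≠ 0) ((↑(List.ofFn β) : Multiset ℕ).erase (β r)) := by
    rw [partsOf, ← Multiset.filter_cons_of_pos (p := (· ≠ 0)) _ hr,
      Multiset.cons_erase (by simp)]
  rw [dropPart, getD_sort_partsOf_partRank hr, hparts, Multiset.erase_cons_head, partsOf,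
    Multiset.ofFn_update]
  simp [Multiset.filter_add, Multiset.filter_cons, Multiset.filter_singleton, add_comm]

theorem sum_update_sub_one {r : Fin k} (hr : β r ≠ 0) :
    ∑ j, Function.update β r (β r - 1) j + 1 = ∑ j, β j := by
  rw [Finset.sum_update_of_mem (mem_univ r), ← Finset.add_sum_erase _ _ (mem_univ r),
    Finset.sdiff_singleton_eq_erase]
  omega

theorem partsOf_eq_zero_iff : partsOf β = 0 ↔ ∑ j, β j = 0 := by
  rw [Finset.sum_eq_zero_iff, ← Multiset.card_eq_zero, card_partsOf, card_eq_zero,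
    filter_eq_empty_iff]
  simp

end Parts

theorem content_zero (n : ℕ) : content n 0 = ∅ :=
  Finset.Icc_eq_empty (by omega)

theorem sub_notMem_content (n m : ℕ) : n - m ∉ content n m := by
  simp only [content, Finset.mem_Icc]
  omega

section Tableaux

variable {n m k : ℕ} {β β' : Fin k → ℕ}

theorem content_succ (hm : m + 1 ≤ n) : content n (m + 1) = insert (n - m) (content n m) := by
  ext x
  simp only [content, Finset.mem_Icc, Finset.mem_insert]
  omega

def minEntry (hm : m + 1 ≤ n) : {a // a ∈ content n (m + 1)} :=
  ⟨n - m, by rw [content_succ hm]; exact mem_insert_self _ _⟩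

theorem minEntry_le (hm : m + 1 ≤ n) (x : {a // a ∈ content n (m + 1)}) :
    (minEntry hm : ℕ) ≤ x := by
  have := x.2
  simp only [content, Finset.mem_Icc] at this
  change n - m ≤ x
  omega

theorem card_filter_content_succ (hm : m + 1 ≤ n) (p : {a // a ∈ content n (m + 1)} → Prop)
    [DecidablePred p] :
    #{x : {a // a ∈ content n (m + 1)} | p x} =
      #{x : {a // a ∈ content n m} | p ⟨x, content_mono n (m + 1) x.2⟩} +
        if p (minEntry hm) then 1 else 0 :=
  card_filter_univ_of_eq_insert (sub_notMem_content n m) (content_succ hm) p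

theorem colOf_lt (T : RSCT n m k β) (x : {a // a ∈ content n m}) :
    colOf T x < β (T.1 x) := by
  rw [← T.2 (T.1 x), colOf]
  refine card_lt_card
    ⟨fun y hy => mem_filter.2 ⟨mem_univ y, (mem_filter.1 hy).2.1⟩, fun h => ?_⟩
  exact lt_irrefl _ (mem_filter.1 (h (mem_filter.2 ⟨mem_univ x, rfl⟩))).2.2

theorem colOf_of_le (T : RSCT n m k β) (x : {a // a ∈ content n m})
    (hx : ∀ y, T.1 y = T.1 x → (x : ℕ) ≤ y) : colOf T x + 1 = β (T.1 x) := by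
  have hfiber : ({y | T.1 y = T.1 x ∧ (x : ℕ) < y} : Finset _) =
      ({y | T.1 y = T.1 x} : Finset _).erase x := by
    ext y
    simp only [mem_filter, mem_univ, true_and, mem_erase]
    constructor
    · rintro ⟨hy, hlt⟩
      exact ⟨fun h => (h ▸ hlt).false, hy⟩
    · rintro ⟨hne, hy⟩
      exact ⟨hy, lt_of_le_of_ne (hx y hy) fun h => hne (Subtype.ext h).symm⟩
  rw [colOf, hfiber, card_erase_add_one (by simp), T.2]

theorem exists_le_of_fiber_ne_zero (T : RSCT n m k β) {j : Fin k} (hj : β j ≠ 0) :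
    ∃ x, T.1 x = j ∧ ∀ y, T.1 y = j → (x : ℕ) ≤ y := by
  have hne : ({y | T.1 y = j} : Finset _).Nonempty := by
    rw [← card_pos, T.2 j]
    omega
  obtain ⟨x, hx, hmin⟩ := exists_min_image _ Subtype.val hne
  exact ⟨x, (mem_filter.1 hx).2, fun y hy => hmin y (mem_filter.2 ⟨mem_univ y, hy⟩)⟩

theorem isInv_minEntry_iff (hm : m + 1 ≤ n) (T : RSCT n (m + 1) k β) (j : Fin k) :
    isInv T (n - m) j ↔ RowPrec β j (T.1 (minEntry hm)) := by
  set r := T.1 (minEntry hm)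
  have hcol : colOf T (minEntry hm) + 1 = β r :=
    colOf_of_le T _ fun y _ => minEntry_le hm y
  constructor
  · rintro ⟨_, x, rfl, -, hx⟩
    have := colOf_lt T x
    change colOf T (minEntry hm) < colOf T x ∨
      colOf T x = colOf T (minEntry hm) ∧ T.1 x < r at hx
    unfold RowPrec
    omega
  · intro hjr
    have hjne : j ≠ r := fun h => by subst h; unfold RowPrec at hjr; omega
    obtain ⟨x, rfl, hxmin⟩ :=
      exists_le_of_fiber_ne_zero T (j := j) (by unfold RowPrec at hjr; omega)
    have hx := colOf_of_le T x hxmin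
    have hlt : n - m < (x : ℕ) := lt_of_le_of_ne (minEntry_le hm x)
      fun h => hjne (congrArg T.1 (Subtype.ext h)).symm
    refine ⟨(minEntry hm).2, x, rfl, hlt, ?_⟩
    change colOf T (minEntry hm) < colOf T x ∨
      colOf T x = colOf T (minEntry hm) ∧ T.1 x < r
    unfold RowPrec at hjr
    omega

def IsRestriction (T' : RSCT n m k β') (T : RSCT n (m + 1) k β) : Prop :=
  ∀ i (hi : i ∈ content n m), T'.1 ⟨i, hi⟩ = T.1 ⟨i, content_mono n (m + 1) hi⟩

theorem colOf_eq_of_isRestriction (hm : m + 1 ≤ n) {T' : RSCT n m k β'}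
    {T : RSCT n (m + 1) k β} (h : IsRestriction T' T) (x : {a // a ∈ content n m}) :
    colOf T ⟨x, content_mono n (m + 1) x.2⟩ = colOf T' x := by
  have hx := x.2
  simp only [content, Finset.mem_Icc] at hx
  rw [colOf, card_filter_content_succ hm, if_neg fun h => by
    change _ ∧ (x : ℕ) < n - m at h; omega, add_zero, colOf]
  exact congrArg card (filter_congr fun y _ => by rw [← h y y.2, ← h x x.2])

theorem isInv_iff_of_isRestriction (hm : m + 1 ≤ n) {T' : RSCT n m k β'}
    {T : RSCT n (m + 1) k β} (h : IsRestriction T' T) {i : ℕ} (hi : i ∈ content n m)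
    (j : Fin k) : isInv T i j ↔ isInv T' i j := by
  constructor
  · rintro ⟨_, x, rfl, hlt, hcol⟩
    have hx : (x : ℕ) ∈ content n m := by
      have := x.2
      simp only [content, Finset.mem_Icc] at this hi ⊢
      omega
    refine ⟨hi, ⟨x, hx⟩, h x hx, hlt, ?_⟩
    rw [← colOf_eq_of_isRestriction hm h ⟨x, hx⟩, ← colOf_eq_of_isRestriction hm h ⟨i, hi⟩,
      h i hi]
    exact hcol
  · rintro ⟨_, x, rfl, hlt, hcol⟩
    refine ⟨content_mono n (m + 1) hi, ⟨x, content_mono n (m + 1) x.2⟩, (h x x.2).symm, hlt,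
      ?_⟩
    rw [colOf_eq_of_isRestriction hm h x, colOf_eq_of_isRestriction hm h ⟨i, hi⟩, ← h i hi]
    exact hcol

theorem invVec_eq_card (T : RSCT n m k β) (i : ℕ) [DecidablePred (isInv T i)] :
    invVec T i = #{j | isInv T i j} := by
  classical
  rw [invVec, InvF, filter_filter]
  refine card_bij (fun p _ => p.2) (fun p hp => ?_) (fun p hp q hq hpq => ?_) (fun j hj => ?_)
  · simp only [mem_filter] at hp ⊢
    exact ⟨mem_univ _, hp.2.2 ▸ hp.2.1⟩
  · simp only [mem_filter] at hp hq
    exact Prod.ext (hp.2.2.trans hq.2.2.symm) hpq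
  · have hj := (mem_filter.1 hj).2
    exact ⟨(i, j), mem_filter.2 ⟨mem_product.2 ⟨hj.1, mem_univ j⟩, hj, rfl⟩, rfl⟩

theorem invVec_of_notMem (T : RSCT n m k β) {i : ℕ} (hi : i ∉ content n m) :
    invVec T i = 0 := by
  classical
  rw [invVec_eq_card, card_eq_zero, filter_eq_empty_iff]
  exact fun j _ ⟨h, _⟩ => hi h

theorem invVec_eq_of_isRestriction (hm : m + 1 ≤ n) {T' : RSCT n m k β'}
    {T : RSCT n (m + 1) k β} (h : IsRestriction T' T) :
    invVec T = fun t =>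
      (if t = n - m then partRank β (T.1 (minEntry hm)) else 0) + invVec T' t := by
  classical
  funext t
  by_cases hmin : t = n - m
  · subst hmin
    rw [if_pos rfl, invVec_of_notMem T' (sub_notMem_content n m), add_zero, invVec_eq_card,
      partRank]
    exact congrArg card (filter_congr fun j _ => isInv_minEntry_iff hm T j)
  rw [if_neg hmin, zero_add]
  by_cases ht : t ∈ content n m
  · rw [invVec_eq_card, invVec_eq_card]
    exact congrArg card (filter_congr fun j _ => isInv_iff_of_isRestriction hm h ht j)
  · rw [invVec_of_notMem T' ht, invVec_of_notMem T]
    rw [content_succ hm, mem_insert]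
    tauto

theorem fiber_minEntry_ne_zero (hm : m + 1 ≤ n) (T : RSCT n (m + 1) k β) :
    β (T.1 (minEntry hm)) ≠ 0 :=
  Nat.ne_zero_of_lt (colOf_lt T (minEntry hm))

theorem exists_isRestriction (hm : m + 1 ≤ n) (T : RSCT n (m + 1) k β) :
    ∃ T' : RSCT n m k (Function.update β (T.1 (minEntry hm)) (β (T.1 (minEntry hm)) - 1)),
      IsRestriction T' T := by
  refine ⟨⟨fun x => T.1 ⟨x, content_mono n (m + 1) x.2⟩, fun j => ?_⟩, fun _ _ => rfl⟩
  have hcard := card_filter_content_succ hm (T.1 · = j)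
  rw [T.2 j] at hcard
  beta_reduce
  rcases eq_or_ne j (T.1 (minEntry hm)) with rfl | hj
  · rw [if_pos rfl] at hcard
    rw [Function.update_self]
    omega
  · rw [if_neg hj.symm] at hcard
    rw [Function.update_of_ne hj]
    omega

theorem exists_isRestriction_eq (hm : m + 1 ≤ n) {r : Fin k} (hr : β r ≠ 0)
    (T' : RSCT n m k (Function.update β r (β r - 1))) :
    ∃ T : RSCT n (m + 1) k β, T.1 (minEntry hm) = r ∧ IsRestriction T' T := by
  let f : {a // a ∈ content n (m + 1)} → Fin k := fun x =>
    if h : (x : ℕ) ∈ content n m then T'.1 ⟨x, h⟩ else r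
  have hf_min : f (minEntry hm) = r := dif_neg (sub_notMem_content n m)
  have hf (x : {a // a ∈ content n m}) : f ⟨x, content_mono n (m + 1) x.2⟩ = T'.1 x :=
    dif_pos x.2
  refine ⟨⟨f, fun j => ?_⟩, hf_min, fun i hi => (hf ⟨i, hi⟩).symm⟩
  rw [card_filter_content_succ hm (f · = j), hf_min]
  simp only [hf]
  rw [T'.2 j]
  rcases eq_or_ne j r with rfl | hj
  · rw [if_pos rfl, Function.update_self]
    omega
  · rw [if_neg hj.symm, Function.update_of_ne hj, add_zero]

end Tableaux

theorem setOf_invVec_eq_singleton_zero {n k : ℕ} {β : Fin k → ℕ} (hβ : ∑ j, β j = 0) :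
    {e | ∃ T : RSCT n 0 k β, e = invVec T} = {fun _ => 0} := by
  have hinv (T : RSCT n 0 k β) : invVec T = fun _ => 0 :=
    funext fun _ => invVec_of_notMem T (by simp [content_zero])
  have : IsEmpty {a // a ∈ content n 0} := ⟨fun x => by simpa [content_zero] using x.2⟩
  ext e
  constructor
  · rintro ⟨T, rfl⟩
    exact hinv T
  · rintro rfl
    refine ⟨⟨isEmptyElim, fun j => ?_⟩, (hinv _).symm⟩
    rw [univ_eq_empty, filter_empty, card_empty]
    exact (sum_eq_zero_iff.1 hβ j (mem_univ j)).symm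

theorem setOf_invVec_eq_SP {SP : Multiset ℕ → ℕ → Set (ℕ → ℕ)} (hSP : SPSpec SP)
    {n m k : ℕ} (hm : m ≤ n) (β : Fin k → ℕ) (hsum : ∑ j, β j = m) :
    {e | ∃ T : RSCT n m k β, e = invVec T} = SP (partsOf β) (n - m + 1) := by
  induction m generalizing k with
  | zero =>
    rw [partsOf_eq_zero_iff.2 hsum, hSP.1]
    exact setOf_invVec_eq_singleton_zero hsum
  | succ m ih =>
    have hparts : partsOf β ≠ 0 := by
      rw [Ne, partsOf_eq_zero_iff, hsum]; omega
    have hrec {r : Fin k} (hr : β r ≠ 0) :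
        {e | ∃ T' : RSCT n m k (Function.update β r (β r - 1)), e = invVec T'} =
          SP (dropPart (partsOf β) (partRank β r)) (n - m + 1) := by
      rw [dropPart_partsOf_partRank hr]
      exact ih (by omega) _ (by have := sum_update_sub_one hr; omega)
    rw [hSP.2 _ _ hparts, show n - (m + 1) + 1 = n - m by omega]
    ext e
    constructor
    · rintro ⟨T, rfl⟩
      have hr := fiber_minEntry_ne_zero hm T
      obtain ⟨T', hT'⟩ := exists_isRestriction hm T
      refine ⟨_, partRank_lt_card_partsOf hr, invVec T', ?_, invVec_eq_of_isRestriction hm hT'⟩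
      rw [← hrec hr]
      exact ⟨T', rfl⟩
    · rintro ⟨i, hi, f, hf, rfl⟩
      obtain ⟨r, hr, rfl⟩ := exists_partRank_eq hi
      rw [← hrec hr] at hf
      obtain ⟨T', rfl⟩ := hf
      obtain ⟨T, hTr, hT⟩ := exists_isRestriction_eq hm hr T'
      exact ⟨T, by rw [invVec_eq_of_isRestriction hm hT, hTr]⟩

/-- Let `λ` be the underlying partition of a composition `β` of `m ≤ n`.
The set of monomials `x^Υ` (recorded by their exponent vectors, the inversion vectors of the
Springer inversion sets) over all row-strict composition tableaux `Υ` of shape `β` equals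
the Garsia–Procesi set `Sp_λ` in the variables starting at `m̄ = n - m + 1`.  In particular
this set depends only on `λ` and not on the ordering of the parts of `β`. -/
theorem stmt5 (n m k : ℕ) (hmn : m ≤ n) (β : Fin k → ℕ) (hsum : ∑ j, β j = m)
    (SP : Multiset ℕ → ℕ → Set (ℕ → ℕ)) (hSP : SPSpec SP) :
    {e : ℕ → ℕ | ∃ T : RSCT n m k β, e = invVec T} =
      SP (Multiset.filter (· ≠ 0) (↑(List.ofFn β) : Multiset ℕ)) (n - m + 1) ∧
    (∀ (k' : ℕ) (β' : Fin k' → ℕ), (∑ j, β' j = m) →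
      Multiset.filter (· ≠ 0) (↑(List.ofFn β') : Multiset ℕ) =
        Multiset.filter (· ≠ 0) (↑(List.ofFn β) : Multiset ℕ) →
      {e : ℕ → ℕ | ∃ T : RSCT n m k' β', e = invVec T} =
        {e : ℕ → ℕ | ∃ T : RSCT n m k β, e = invVec T}) := by
  refine ⟨setOf_invVec_eq_SP hSP hmn β hsum, fun k' β' hsum' hparts => ?_⟩
  rw [setOf_invVec_eq_SP hSP hmn β' hsum', setOf_invVec_eq_SP hSP hmn β hsum]
  exact congrArg (SP · _) hparts
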